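/- The free energy F is twice continuously differentiable on ℝ and the tension τ̂ = F' satisfies c₁ ≤ τ̂'(ρ) ≤ c₂ for all ρ ∈ ℝ; in particular the tension is strictly increasing, so the isothermal p-system ∂_t r = ∂_x p, ∂_t p = ∂_x τ̂(r) is strictly hyperbolic. -/

import Mathlib

open MeasureTheory Real

/-- The Gibbs function `G(τ) = log ∫ exp(τ r - V(r)) dr`. -/
noncomputable def gibbsG (V : ℝ → ℝ) (τ : ℝ) : ℝ :=
  Real.log (∫ r : ℝ, Real.exp (τ * r - V r))

/-- The free energy `F(ρ) = sup_τ (τ ρ - G(τ))`. -/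
noncomputable def freeF (V : ℝ → ℝ) (ρ : ℝ) : ℝ :=
  ⨆ τ : ℝ, (τ * ρ - gibbsG V τ)

/-!
`G = gibbsG V` is the cumulant generating function of the measure `exp (-V r) dr`, hence smooth,
and `G'' τ` is the variance of the tilted density `exp (τ r - V r) / Z(τ)` with mean `m`.
Integrating by parts against this density gives `E[(r - m) (V' r - V' m)] = 1`, and since
`c₁ (r - m)² ≤ (r - m) (V' r - V' m) ≤ c₂ (r - m)²` the variance lies in `[1 / c₂, 1 / c₁]`.
The free energy is the Legendre transform of `G`, and `G'` is a `C¹`-diffeomorphism of `ℝ`;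
so `F' = (G')⁻¹` and `F'' (G' τ) = 1 / G'' τ ∈ [c₁, c₂]`.
-/
open Set

section Calculus

variable {f : ℝ → ℝ} {a b : ℝ}

theorem ConvexOn.add_deriv_mul_sub_le (hf : ConvexOn ℝ univ f) {x : ℝ}
    (hd : DifferentiableAt ℝ f x) (y : ℝ) : f x + deriv f x * (y - x) ≤ f y := by
  rcases lt_trichotomy x y with hxy | rfl | hyx
  · have h := hf.deriv_le_slope (mem_univ x) (mem_univ y) hxy hd
    rw [slope_def_field, le_div_iff₀ (sub_pos.2 hxy)] at h
    linarith
  · simp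
  · have h := hf.slope_le_deriv (mem_univ y) (mem_univ x) hyx hd
    rw [slope_def_field, div_le_iff₀ (sub_pos.2 hyx)] at h
    linarith

theorem mul_sq_le_sub_mul_sub (hf : Differentiable ℝ f) (h : ∀ r, a ≤ deriv f r) (x y : ℝ) :
    a * (y - x) ^ 2 ≤ (f y - f x) * (y - x) := by
  rcases le_total x y with hxy | hyx
  · nlinarith [mul_sub_le_image_sub_of_le_deriv hf h hxy]
  · nlinarith [mul_sub_le_image_sub_of_le_deriv hf h hyx]

theorem sub_mul_sub_le_mul_sq (hf : Differentiable ℝ f) (h : ∀ r, deriv f r ≤ b) (x y : ℝ) :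
    (f y - f x) * (y - x) ≤ b * (y - x) ^ 2 := by
  rcases le_total x y with hxy | hyx
  · nlinarith [image_sub_le_mul_sub_of_deriv_le hf h hxy]
  · nlinarith [image_sub_le_mul_sub_of_deriv_le hf h hyx]

theorem add_deriv_mul_add_sq_le (hf : Differentiable ℝ f) (hf' : Differentiable ℝ (deriv f))
    (h : ∀ r, a ≤ deriv (deriv f) r) (x y : ℝ) :
    f x + deriv f x * (y - x) + a / 2 * (y - x) ^ 2 ≤ f y := by
  set g : ℝ → ℝ := fun y => f y - a / 2 * y ^ 2
  have hg : ∀ y, HasDerivAt g (deriv f y - a * y) y := fun y =>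
    ((hf y).hasDerivAt.fun_sub ((hasDerivAt_pow 2 y).const_mul (a / 2))).congr_deriv (by ring)
  have hg_convex : ConvexOn ℝ univ g := by
    refine Monotone.convexOn_univ_of_deriv (fun y => (hg y).differentiableAt) fun x y hxy => ?_
    rw [(hg x).deriv, (hg y).deriv]
    linarith [mul_sub_le_image_sub_of_le_deriv hf' h hxy]
  have := hg_convex.add_deriv_mul_sub_le (hg x).differentiableAt y
  rw [(hg x).deriv] at this
  simp only [g] at this
  nlinarith

end Calculus

noncomputable def legendre (G : ℝ → ℝ) (ρ : ℝ) : ℝ := ⨆ τ : ℝ, (τ * ρ - G τ)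

section Legendre

variable {G : ℝ → ℝ} {a : ℝ}

theorem legendre_eq_of_deriv_eq (hG : ConvexOn ℝ univ G) {τ ρ : ℝ}
    (hd : DifferentiableAt ℝ G τ) (hτ : deriv G τ = ρ) : legendre G ρ = τ * ρ - G τ := by
  have hle : ∀ σ, σ * ρ - G σ ≤ τ * ρ - G τ := fun σ => by
    have := hG.add_deriv_mul_sub_le hd σ
    rw [hτ] at this
    linarith
  exact le_antisymm (ciSup_le hle) (le_ciSup ⟨_, forall_mem_range.2 hle⟩ τ)

variable (hG' : Differentiable ℝ (deriv G)) (ha : 0 < a) (hG'' : ∀ τ, a ≤ deriv (deriv G) τ)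
include hG' ha hG''

theorem surjective_deriv_of_le_deriv_deriv : Function.Surjective (deriv G) := by
  intro ρ
  set t := |ρ - deriv G 0| / a
  have ht : 0 ≤ t := by positivity
  have hgrowth : ∀ ⦃x y⦄, x ≤ y → a * (y - x) ≤ deriv G y - deriv G x :=
    mul_sub_le_image_sub_of_le_deriv hG' hG''
  have hmem : ρ ∈ Icc (deriv G (-t)) (deriv G t) := by
    have h₁ := hgrowth (neg_nonpos.2 ht)
    have h₂ := hgrowth ht
    have hat : a * t = |ρ - deriv G 0| := mul_div_cancel₀ _ ha.ne'
    constructor <;> nlinarith [le_abs_self (ρ - deriv G 0), neg_abs_le (ρ - deriv G 0)]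
  obtain ⟨τ, -, hτ⟩ := intermediate_value_Icc (by linarith) hG'.continuous.continuousOn hmem
  exact ⟨τ, hτ⟩

theorem exists_continuous_rightInverse_deriv :
    ∃ θ : ℝ → ℝ, Continuous θ ∧ Function.RightInverse θ (deriv G) := by
  have hmono : StrictMono (deriv G) :=
    strictMono_of_deriv_pos fun τ => ha.trans_le (hG'' τ)
  let e := hmono.orderIsoOfSurjective _ (surjective_deriv_of_le_deriv_deriv hG' ha hG'')
  exact ⟨e.symm, e.symm.continuous, e.apply_symm_apply⟩

omit hG' in
theorem legendre_contDiff_two_and_exists_deriv_deriv_eq (hG : ContDiff ℝ 2 G) :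
    ContDiff ℝ 2 (legendre G) ∧
      ∀ ρ, ∃ τ, deriv (deriv (legendre G)) ρ = (deriv (deriv G) τ)⁻¹ := by
  have hGd : Differentiable ℝ G := hG.differentiable two_ne_zero
  have hG' : Differentiable ℝ (deriv G) := hG.differentiable_deriv_two
  obtain ⟨θ, hθc, hθ⟩ := exists_continuous_rightInverse_deriv hG' ha hG''
  have hθ' : ∀ ρ, HasDerivAt θ (deriv (deriv G) (θ ρ))⁻¹ ρ := fun ρ =>
    .of_local_left_inverse hθc.continuousAt (hG' (θ ρ)).hasDerivAt
      (ha.trans_le (hG'' _)).ne' (.of_forall hθ)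
  have hconv : ConvexOn ℝ univ G :=
    (monotone_of_deriv_nonneg hG' fun τ => ha.le.trans (hG'' τ)).convexOn_univ_of_deriv hGd
  have hF : legendre G = fun ρ => θ ρ * ρ - G (θ ρ) :=
    funext fun ρ => legendre_eq_of_deriv_eq hconv (hGd _) (hθ ρ)
  -- envelope theorem: the terms containing `θ'` cancel because `G' ∘ θ = id`
  have hFd : ∀ ρ, HasDerivAt (legendre G) (θ ρ) ρ := fun ρ => by
    rw [hF]
    refine (((hθ' ρ).mul (hasDerivAt_id ρ)).sub
      ((hGd _).hasDerivAt.comp ρ (hθ' ρ))).congr_deriv ?_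
    rw [hθ ρ]
    simp only [id]
    ring
  have hF' : deriv (legendre G) = θ := funext fun ρ => (hFd ρ).deriv
  have hF'' : deriv θ = fun ρ => (deriv (deriv G) (θ ρ))⁻¹ :=
    funext fun ρ => (hθ' ρ).deriv
  refine ⟨?_, fun ρ => ⟨θ ρ, by rw [hF', hF'']⟩⟩
  rw [show (2 : WithTop ℕ∞) = 1 + 1 from rfl, contDiff_succ_iff_deriv, hF',
    contDiff_one_iff_deriv, hF'']
  exact ⟨fun ρ => (hFd ρ).differentiableAt, by simp, fun ρ => (hθ' ρ).differentiableAt,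
    (hG.deriv'.continuous_deriv_one.comp hθc).inv₀ fun ρ => (ha.trans_le (hG'' _)).ne'⟩

end Legendre

open Polynomial in
theorem integrable_eval_mul_exp_neg {U : ℝ → ℝ} {a : ℝ} (hU : Differentiable ℝ U)
    (hU' : Differentiable ℝ (deriv U)) (ha : 0 < a) (hlow : ∀ r, a ≤ deriv (deriv U) r)
    (p : ℝ[X]) : Integrable fun r => p.eval r * exp (-U r) := by
  set K := exp (-U 0 + deriv U 0 ^ 2 / a)
  -- complete the square in the quadratic lower bound `U r ≥ U 0 + U' 0 r + a r² / 2`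
  have hgauss : ∀ r, exp (-U r) ≤ K * exp (-(a / 4) * r ^ 2) := fun r => by
    have hq := add_deriv_mul_add_sq_le hU hU' hlow 0 r
    have hsq : 0 ≤ (a / 2 * r + deriv U 0) ^ 2 / a := by positivity
    have hid : (a / 2 * r + deriv U 0) ^ 2 / a
        = a / 4 * r ^ 2 + deriv U 0 * r + deriv U 0 ^ 2 / a := by
      field_simp
      ring
    rw [← exp_add]
    exact exp_le_exp.2 (by simp only [sub_zero] at hq; nlinarith)
  have hmonomial : ∀ n : ℕ, Integrable fun r => r ^ n * exp (-U r) := fun n => by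
    have hg : Integrable fun r : ℝ => r ^ n * exp (-(a / 4) * r ^ 2) := by
      simpa [rpow_natCast] using integrable_rpow_mul_exp_neg_mul_sq (by positivity : 0 < a / 4)
        (s := n) (by linarith [n.cast_nonneg (α := ℝ)])
    have hUc := hU.continuous
    refine (hg.norm.const_mul K).mono' (by fun_prop) (ae_of_all _ fun r => ?_)
    rw [norm_mul, norm_mul, Real.norm_of_nonneg (exp_pos _).le,
      Real.norm_of_nonneg (exp_pos _).le]
    nlinarith [hgauss r, norm_nonneg (r ^ n)]
  simp_rw [eval_eq_sum_range, Finset.sum_mul]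
  exact integrable_finsetSum _ fun i _ => by
    simpa [mul_assoc] using (hmonomial i).const_mul (p.coeff i)

-- Stein's identity for the density `exp (-U)`, centred at its mean `m`.
theorem integral_sub_mul_deriv_sub_deriv_mul_exp_neg {U : ℝ → ℝ} (hU : Differentiable ℝ U)
    {m : ℝ} (hw : Integrable fun r => exp (-U r))
    (hdev : Integrable fun r => (r - m) * exp (-U r))
    (hcross : Integrable fun r => (r - m) * (deriv U r - deriv U m) * exp (-U r))
    (hmean : ∫ r, (r - m) * exp (-U r) = 0) :
    ∫ r, (r - m) * (deriv U r - deriv U m) * exp (-U r) = ∫ r, exp (-U r) := by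
  have hU'w : Integrable fun r => (r - m) * deriv U r * exp (-U r) :=
    (hcross.add (hdev.const_mul (deriv U m))).congr
      (ae_of_all _ fun r => by simp only [Pi.add_apply]; ring)
  have hderiv : ∀ r, HasDerivAt (fun r => (r - m) * exp (-U r))
      (exp (-U r) - (r - m) * deriv U r * exp (-U r)) r := fun r =>
    (((hasDerivAt_id r).sub_const m).mul (hU r).hasDerivAt.neg.exp).congr_deriv (by simp; ring)
  have hibp := integral_eq_zero_of_hasDerivAt_of_integrable hderiv (hw.sub hU'w) hdev
  rw [integral_sub hw hU'w, sub_eq_zero] at hibp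
  calc ∫ r, (r - m) * (deriv U r - deriv U m) * exp (-U r)
      = (∫ r, (r - m) * deriv U r * exp (-U r)) - deriv U m * ∫ r, (r - m) * exp (-U r) := by
        rw [← integral_const_mul, ← integral_sub hU'w (hdev.const_mul _)]
        congr 1 with r
        ring
    _ = ∫ r, exp (-U r) := by rw [← hibp, hmean, mul_zero, sub_zero]

noncomputable def gibbsMean (U : ℝ → ℝ) : ℝ := (∫ r, r * exp (-U r)) / ∫ r, exp (-U r)

noncomputable def gibbsVariance (U : ℝ → ℝ) : ℝ :=
  (∫ r, (r - gibbsMean U) ^ 2 * exp (-U r)) / ∫ r, exp (-U r)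

theorem integral_sub_gibbsMean_mul_exp_neg {U : ℝ → ℝ} (hw : Integrable fun r => exp (-U r))
    (hw₁ : Integrable fun r => r * exp (-U r)) : ∫ r, (r - gibbsMean U) * exp (-U r) = 0 :=
  calc ∫ r, (r - gibbsMean U) * exp (-U r)
      = (∫ r, r * exp (-U r)) - gibbsMean U * ∫ r, exp (-U r) := by
        rw [← integral_const_mul, ← integral_sub hw₁ (hw.const_mul _)]
        simp only [sub_mul]
    _ = 0 := sub_eq_zero.2 (div_mul_cancel₀ _ (integral_exp_pos hw).ne').symm

open Polynomial in
theorem gibbsVariance_mem_Icc {U : ℝ → ℝ} {a b : ℝ} (hU : Differentiable ℝ U)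
    (hU' : Differentiable ℝ (deriv U)) (ha : 0 < a) (hlow : ∀ r, a ≤ deriv (deriv U) r)
    (hhigh : ∀ r, deriv (deriv U) r ≤ b) : gibbsVariance U ∈ Icc b⁻¹ a⁻¹ := by
  have hb : 0 < b := ha.trans_le ((hlow 0).trans (hhigh 0))
  set m := gibbsMean U
  have hpoly := integrable_eval_mul_exp_neg hU hU' ha hlow
  have hw : Integrable fun r => exp (-U r) := by simpa only [eval_one, one_mul] using hpoly 1
  have hw₁ : Integrable fun r => r * exp (-U r) := by
    have h := hpoly X
    simpa only [eval_X] using h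
  have hdev : Integrable fun r => (r - m) * exp (-U r) := by
    have h := hpoly (X - C m)
    simpa only [eval_sub, eval_X, eval_C] using h
  have hdev2 : Integrable fun r => (r - m) ^ 2 * exp (-U r) := by
    have h := hpoly ((X - C m) ^ 2)
    simpa only [eval_pow, eval_sub, eval_X, eval_C] using h
  have hZ : 0 < ∫ r, exp (-U r) := integral_exp_pos hw
  have hsandwich : ∀ r,
      a * ((r - m) ^ 2 * exp (-U r)) ≤ (r - m) * (deriv U r - deriv U m) * exp (-U r) ∧
        (r - m) * (deriv U r - deriv U m) * exp (-U r) ≤ b * ((r - m) ^ 2 * exp (-U r)) :=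
      fun r => by
    have h₁ := mul_sq_le_sub_mul_sub hU' hlow m r
    have h₂ := sub_mul_sub_le_mul_sq hU' hhigh m r
    have := exp_pos (-U r)
    constructor <;> nlinarith
  have hcross : Integrable fun r => (r - m) * (deriv U r - deriv U m) * exp (-U r) := by
    have hUc := hU.continuous
    have hU'c := hU'.continuous
    refine (hdev2.const_mul b).mono' (by fun_prop : Continuous _).aestronglyMeasurable
      (ae_of_all _ fun r => ?_)
    have hnonneg : 0 ≤ (r - m) ^ 2 * exp (-U r) := by positivity
    rw [Real.norm_eq_abs, abs_le]
    constructor <;> nlinarith [hsandwich r, mul_nonneg ha.le hnonneg, mul_nonneg hb.le hnonneg]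
  have hstein := integral_sub_mul_deriv_sub_deriv_mul_exp_neg hU hw hdev hcross
    (integral_sub_gibbsMean_mul_exp_neg hw hw₁)
  have hlo := integral_mono (hdev2.const_mul a) hcross fun r => (hsandwich r).1
  have hhi := integral_mono hcross (hdev2.const_mul b) fun r => (hsandwich r).2
  rw [integral_const_mul, hstein] at hlo hhi
  constructor
  · rw [gibbsVariance, le_div_iff₀ hZ, inv_mul_le_iff₀ hb]
    exact hhi
  · rw [gibbsVariance, div_le_iff₀ hZ, ← div_eq_inv_mul, le_div_iff₀ ha, mul_comm]
    exact hlo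

noncomputable def gibbsMeasure (V : ℝ → ℝ) : Measure ℝ :=
  volume.withDensity fun r => ENNReal.ofReal (exp (-V r))

section GibbsMeasure

open ProbabilityTheory

variable {V : ℝ → ℝ}

theorem smul_exp_mul_eq_exp_mul_sub (τ r : ℝ) :
    (exp (-V r)).toNNReal • exp (τ * r) = exp (τ * r - V r) := by
  rw [NNReal.smul_def, Real.coe_toNNReal _ (exp_pos _).le, smul_eq_mul, ← exp_add, neg_add_eq_sub]

theorem integral_mul_exp_gibbsMeasure (hV : Continuous V) (g : ℝ → ℝ) (τ : ℝ) :
    ∫ r, g r * exp (τ * r) ∂gibbsMeasure V = ∫ r, g r * exp (τ * r - V r) := by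
  have hmeas : Measurable fun r => (exp (-V r)).toNNReal := by fun_prop
  refine (integral_withDensity_eq_integral_smul hmeas _).trans
    (integral_congr_ae (ae_of_all _ fun r => ?_))
  dsimp only
  rw [← mul_smul_comm, smul_exp_mul_eq_exp_mul_sub]

theorem integrableExpSet_gibbsMeasure (hV : Continuous V)
    (h : ∀ τ, Integrable fun r => exp (τ * r - V r)) :
    integrableExpSet id (gibbsMeasure V) = univ :=
  eq_univ_of_forall fun τ => (integrable_withDensity_iff_integrable_smul (by fun_prop)).2 <| by
    simpa only [id, smul_exp_mul_eq_exp_mul_sub] using h τ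

theorem mgf_gibbsMeasure (hV : Continuous V) (τ : ℝ) :
    mgf id (gibbsMeasure V) τ = ∫ r, exp (τ * r - V r) := by
  simpa [mgf] using integral_mul_exp_gibbsMeasure hV 1 τ

theorem gibbsG_eq_cgf (hV : Continuous V) : gibbsG V = cgf id (gibbsMeasure V) :=
  funext fun τ => by rw [cgf, mgf_gibbsMeasure hV, gibbsG]

variable (hV : Differentiable ℝ V) (hV' : Differentiable ℝ (deriv V))
include hV

theorem deriv_sub_mul_id (τ : ℝ) : deriv (fun r => V r - τ * r) = fun r => deriv V r - τ :=
  funext fun r => ((hV r).hasDerivAt.sub ((hasDerivAt_id r).const_mul τ)).deriv.trans (by simp)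

theorem deriv_deriv_sub_mul_id (τ : ℝ) :
    deriv (deriv fun r => V r - τ * r) = deriv (deriv V) := by
  simp [deriv_sub_mul_id hV]

include hV'

theorem differentiable_deriv_sub_mul_id (τ : ℝ) :
    Differentiable ℝ (deriv fun r => V r - τ * r) := by
  rw [deriv_sub_mul_id hV]
  exact hV'.sub_const τ

theorem integrable_exp_mul_sub {c : ℝ} (hc : 0 < c) (hlow : ∀ r, c ≤ deriv (deriv V) r)
    (τ : ℝ) : Integrable fun r => exp (τ * r - V r) := by
  have h := integrable_eval_mul_exp_neg (U := fun r => V r - τ * r) (by fun_prop)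
    (differentiable_deriv_sub_mul_id hV hV' τ) hc (by rwa [deriv_deriv_sub_mul_id hV]) 1
  simpa only [Polynomial.eval_one, one_mul, neg_sub] using h

theorem contDiff_gibbsG {c : ℝ} (hc : 0 < c) (hlow : ∀ r, c ≤ deriv (deriv V) r)
    {n : WithTop ℕ∞} : ContDiff ℝ n (gibbsG V) := by
  have h := analyticOnNhd_cgf (X := id) (μ := gibbsMeasure V)
  rw [integrableExpSet_gibbsMeasure hV.continuous (integrable_exp_mul_sub hV hV' hc hlow),
    interior_univ] at h
  rw [gibbsG_eq_cgf hV.continuous]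
  exact h.contDiff

theorem deriv_deriv_gibbsG {c : ℝ} (hc : 0 < c) (hlow : ∀ r, c ≤ deriv (deriv V) r)
    (τ : ℝ) : deriv (deriv (gibbsG V)) τ = gibbsVariance fun r => V r - τ * r := by
  have hτ : τ ∈ interior (integrableExpSet id (gibbsMeasure V)) := by
    simp [integrableExpSet_gibbsMeasure hV.continuous (integrable_exp_mul_sub hV hV' hc hlow)]
  have h := iteratedDeriv_two_cgf_eq_integral hτ
  rw [iteratedDeriv_succ, iteratedDeriv_one] at h
  rw [gibbsG_eq_cgf hV.continuous, h, deriv_cgf hτ]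
  simp only [mgf_gibbsMeasure hV.continuous, id, integral_mul_exp_gibbsMeasure hV.continuous,
    gibbsVariance, gibbsMean, neg_sub]

theorem deriv_deriv_gibbsG_mem_Icc {c₁ c₂ : ℝ} (hc₁ : 0 < c₁)
    (hlow : ∀ r, c₁ ≤ deriv (deriv V) r) (hhigh : ∀ r, deriv (deriv V) r ≤ c₂) (τ : ℝ) :
    deriv (deriv (gibbsG V)) τ ∈ Icc c₂⁻¹ c₁⁻¹ := by
  rw [deriv_deriv_gibbsG hV hV' hc₁ hlow]
  exact gibbsVariance_mem_Icc (by fun_prop) (differentiable_deriv_sub_mul_id hV hV' τ) hc₁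
    (by rwa [deriv_deriv_sub_mul_id hV]) (by rwa [deriv_deriv_sub_mul_id hV])

end GibbsMeasure

/-- the free energy `F` is twice continuously differentiable and the
tension `τ̂ = F'` satisfies `c₁ ≤ τ̂'(ρ) ≤ c₂`; in particular the tension is strictly
increasing (strict hyperbolicity of the isothermal p-system). -/
theorem freeF_C2_and_tension_deriv_bounds
    (V : ℝ → ℝ) (c₁ c₂ : ℝ) (hc₁ : 0 < c₁)
    (hV : ContDiff ℝ 2 V)
    (hlow : ∀ r : ℝ, c₁ ≤ deriv (deriv V) r)
    (hhigh : ∀ r : ℝ, deriv (deriv V) r ≤ c₂) :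
    ContDiff ℝ 2 (freeF V) ∧
    (∀ ρ : ℝ, c₁ ≤ deriv (deriv (freeF V)) ρ ∧ deriv (deriv (freeF V)) ρ ≤ c₂) ∧
    StrictMono (deriv (freeF V)) := by
  rw [show freeF V = legendre (gibbsG V) from rfl]
  have hVd : Differentiable ℝ V := hV.differentiable two_ne_zero
  have hVd' : Differentiable ℝ (deriv V) := hV.differentiable_deriv_two
  have hc₂ : 0 < c₂ := hc₁.trans_le ((hlow 0).trans (hhigh 0))
  have hvar := deriv_deriv_gibbsG_mem_Icc hVd hVd' hc₁ hlow hhigh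
  obtain ⟨hF, hF''⟩ := legendre_contDiff_two_and_exists_deriv_deriv_eq (inv_pos.2 hc₂)
    (fun τ => (hvar τ).1) (contDiff_gibbsG hVd hVd' hc₁ hlow)
  have hbounds : ∀ ρ, c₁ ≤ deriv (deriv (legendre (gibbsG V))) ρ ∧
      deriv (deriv (legendre (gibbsG V))) ρ ≤ c₂ := fun ρ => by
    obtain ⟨τ, hτ⟩ := hF'' ρ
    have hpos : 0 < deriv (deriv (gibbsG V)) τ := (inv_pos.2 hc₂).trans_le (hvar τ).1
    rw [hτ, le_inv_comm₀ hc₁ hpos, inv_le_comm₀ hpos hc₂]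
    exact ⟨(hvar τ).2, (hvar τ).1⟩
  exact ⟨hF, hbounds, strictMono_of_deriv_pos fun ρ => hc₁.trans_le (hbounds ρ).1⟩
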